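/- arXiv:2410.16484 — 2 statements merged into one kernel-verified Lean document; each statement's English description precedes it below -/
import Mathlib

section
/- The square root of the discrete Gromov-Wasserstein discrepancy satisfies the triangle inequality: for finite metric measure spaces (D1,μ1), (D2,μ2), (D3,μ3), GW(D1,μ1,D3,μ3)^{1/2} ≤ GW(D1,μ1,D2,μ2)^{1/2} + GW(D2,μ2,D3,μ3)^{1/2}. -/
open Finset

/-- Coupling polytope: nonnegative matrices with prescribed marginals. -/
def couplings {n m : ℕ} (μ1 : Fin n → ℝ) (μ2 : Fin m → ℝ) :
    Set (Fin n → Fin m → ℝ) :=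
  {π | (∀ i j, 0 ≤ π i j) ∧ (∀ i, ∑ j, π i j = μ1 i) ∧ (∀ j, ∑ i, π i j = μ2 j)}

/-- Discrete Gromov-Wasserstein objective. -/
noncomputable def GWobj {n m : ℕ} (D1 : Fin n → Fin n → ℝ) (D2 : Fin m → Fin m → ℝ)
    (π : Fin n → Fin m → ℝ) : ℝ :=
  ∑ i, ∑ j, ∑ k, ∑ l, (D1 i k - D2 j l) ^ 2 * π i j * π k l

/-- Discrete Gromov-Wasserstein discrepancy. -/
noncomputable def GW {n m : ℕ} (D1 : Fin n → Fin n → ℝ) (μ1 : Fin n → ℝ)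
    (D2 : Fin m → Fin m → ℝ) (μ2 : Fin m → ℝ) : ℝ :=
  sInf (GWobj D1 D2 '' couplings μ1 μ2)

/-! ### Auxiliary lemmas -/

lemma GWobj_nonneg {n m : ℕ} (D1 : Fin n → Fin n → ℝ) (D2 : Fin m → Fin m → ℝ)
    {π : Fin n → Fin m → ℝ} (hπ : ∀ i j, 0 ≤ π i j) : 0 ≤ GWobj D1 D2 π := by
  refine Finset.sum_nonneg fun i _ => Finset.sum_nonneg fun j _ =>
    Finset.sum_nonneg fun k _ => Finset.sum_nonneg fun l _ => ?_
  exact mul_nonneg (mul_nonneg (sq_nonneg _) (hπ i j)) (hπ k l)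

/-- Weighted Minkowski (L²) triangle inequality for finite sums. -/
lemma weighted_minkowski {ι : Type*} [Fintype ι] (w a b : ι → ℝ) (hw : ∀ i, 0 ≤ w i) :
    Real.sqrt (∑ i, w i * (a i + b i) ^ 2)
      ≤ Real.sqrt (∑ i, w i * a i ^ 2) + Real.sqrt (∑ i, w i * b i ^ 2) := by
  set A := ∑ i, w i * a i ^ 2 with hA
  set B := ∑ i, w i * b i ^ 2 with hB
  have hA0 : 0 ≤ A := Finset.sum_nonneg fun i _ => mul_nonneg (hw i) (sq_nonneg _)
  have hB0 : 0 ≤ B := Finset.sum_nonneg fun i _ => mul_nonneg (hw i) (sq_nonneg _)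
  have hcs : ∑ i, w i * (a i * b i) ≤ Real.sqrt A * Real.sqrt B := by
    have h := Real.sum_mul_le_sqrt_mul_sqrt Finset.univ
      (fun i => Real.sqrt (w i) * a i) (fun i => Real.sqrt (w i) * b i)
    have h1 : ∀ i : ι, Real.sqrt (w i) * a i * (Real.sqrt (w i) * b i)
        = w i * (a i * b i) := fun i => by
      rw [mul_mul_mul_comm, Real.mul_self_sqrt (hw i)]
    have h2 : ∀ i : ι, (Real.sqrt (w i) * a i) ^ 2 = w i * a i ^ 2 := fun i => by
      rw [mul_pow, Real.sq_sqrt (hw i)]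
    have h3 : ∀ i : ι, (Real.sqrt (w i) * b i) ^ 2 = w i * b i ^ 2 := fun i => by
      rw [mul_pow, Real.sq_sqrt (hw i)]
    calc ∑ i, w i * (a i * b i) = ∑ i, Real.sqrt (w i) * a i * (Real.sqrt (w i) * b i) :=
          (Finset.sum_congr rfl fun i _ => (h1 i)).symm
      _ ≤ Real.sqrt (∑ i, (Real.sqrt (w i) * a i) ^ 2)
          * Real.sqrt (∑ i, (Real.sqrt (w i) * b i) ^ 2) := h
      _ = Real.sqrt A * Real.sqrt B := by
          rw [Finset.sum_congr rfl fun i _ => h2 i, Finset.sum_congr rfl fun i _ => h3 i]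
  have hexp : (∑ i, w i * (a i + b i) ^ 2)
      = A + 2 * (∑ i, w i * (a i * b i)) + B := by
    have hpt : ∀ i, w i * (a i + b i) ^ 2
        = w i * a i ^ 2 + 2 * (w i * (a i * b i)) + w i * b i ^ 2 := fun i => by ring
    rw [Finset.sum_congr rfl fun i _ => hpt i, Finset.sum_add_distrib,
      Finset.sum_add_distrib, ← Finset.mul_sum, hA, hB]
  have hbound : (∑ i, w i * (a i + b i) ^ 2) ≤ (Real.sqrt A + Real.sqrt B) ^ 2 := by
    have hsq : (Real.sqrt A + Real.sqrt B) ^ 2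
        = A + 2 * Real.sqrt A * Real.sqrt B + B := by
      rw [add_sq, Real.sq_sqrt hA0, Real.sq_sqrt hB0]
    rw [hexp, hsq]
    linarith
  calc Real.sqrt (∑ i, w i * (a i + b i) ^ 2)
      ≤ Real.sqrt ((Real.sqrt A + Real.sqrt B) ^ 2) := Real.sqrt_le_sqrt hbound
    _ = Real.sqrt A + Real.sqrt B := Real.sqrt_sq (by positivity)

section Collapse

variable {A B C : Type*} [Fintype A] [Fintype B] [Fintype C]

/-- Marginalize the third index of a 6-fold sum. -/
lemma collapse3_right (σ : A → B → C → ℝ) (τ : A → B → ℝ)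
    (h : ∀ a b, ∑ c, σ a b c = τ a b) (F : A → B → A → B → ℝ) :
    ∑ a, ∑ b, ∑ c, ∑ a', ∑ b', ∑ c', F a b a' b' * σ a b c * σ a' b' c'
      = ∑ a, ∑ b, ∑ a', ∑ b', F a b a' b' * τ a b * τ a' b' := by
  refine Finset.sum_congr rfl fun a _ => Finset.sum_congr rfl fun b _ => ?_
  calc ∑ c, ∑ a', ∑ b', ∑ c', F a b a' b' * σ a b c * σ a' b' c'
      = ∑ c, σ a b c * ∑ a', ∑ b', ∑ c', F a b a' b' * σ a' b' c' := by
        refine Finset.sum_congr rfl fun c _ => ?_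
        rw [Finset.mul_sum]
        refine Finset.sum_congr rfl fun a' _ => ?_
        rw [Finset.mul_sum]
        refine Finset.sum_congr rfl fun b' _ => ?_
        rw [Finset.mul_sum]
        exact Finset.sum_congr rfl fun c' _ => by ring
    _ = τ a b * ∑ a', ∑ b', ∑ c', F a b a' b' * σ a' b' c' := by
        rw [← Finset.sum_mul, h a b]
    _ = ∑ a', ∑ b', F a b a' b' * τ a b * τ a' b' := by
        rw [Finset.mul_sum]
        refine Finset.sum_congr rfl fun a' _ => ?_
        rw [Finset.mul_sum]
        refine Finset.sum_congr rfl fun b' _ => ?_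
        rw [← Finset.mul_sum, h a' b']
        ring

/-- Marginalize the first index of a 6-fold sum. -/
lemma collapse3_left (σ : A → B → C → ℝ) (τ : B → C → ℝ)
    (h : ∀ b c, ∑ a, σ a b c = τ b c) (F : B → C → B → C → ℝ) :
    ∑ a, ∑ b, ∑ c, ∑ a', ∑ b', ∑ c', F b c b' c' * σ a b c * σ a' b' c'
      = ∑ b, ∑ c, ∑ b', ∑ c', F b c b' c' * τ b c * τ b' c' := by
  rw [Finset.sum_comm]
  refine Finset.sum_congr rfl fun b _ => ?_
  rw [Finset.sum_comm]
  refine Finset.sum_congr rfl fun c _ => ?_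
  have hS : (∑ a', ∑ b', ∑ c', F b c b' c' * σ a' b' c')
      = ∑ b', ∑ c', F b c b' c' * τ b' c' := by
    rw [Finset.sum_comm]
    refine Finset.sum_congr rfl fun b' _ => ?_
    rw [Finset.sum_comm]
    refine Finset.sum_congr rfl fun c' _ => ?_
    rw [← Finset.mul_sum, h b' c']
  calc ∑ a, ∑ a', ∑ b', ∑ c', F b c b' c' * σ a b c * σ a' b' c'
      = ∑ a, σ a b c * ∑ a', ∑ b', ∑ c', F b c b' c' * σ a' b' c' := by
        refine Finset.sum_congr rfl fun a _ => ?_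
        rw [Finset.mul_sum]
        refine Finset.sum_congr rfl fun a' _ => ?_
        rw [Finset.mul_sum]
        refine Finset.sum_congr rfl fun b' _ => ?_
        rw [Finset.mul_sum]
        exact Finset.sum_congr rfl fun c' _ => by ring
    _ = τ b c * ∑ a', ∑ b', ∑ c', F b c b' c' * σ a' b' c' := by
        rw [← Finset.sum_mul, h b c]
    _ = τ b c * ∑ b', ∑ c', F b c b' c' * τ b' c' := by rw [hS]
    _ = ∑ b', ∑ c', F b c b' c' * τ b c * τ b' c' := by
        rw [Finset.mul_sum]
        refine Finset.sum_congr rfl fun b' _ => ?_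
        rw [Finset.mul_sum]
        exact Finset.sum_congr rfl fun c' _ => by ring

/-- Marginalize the middle index of a 6-fold sum. -/
lemma collapse3_mid (σ : A → B → C → ℝ) (τ : A → C → ℝ)
    (h : ∀ a c, ∑ b, σ a b c = τ a c) (F : A → C → A → C → ℝ) :
    ∑ a, ∑ b, ∑ c, ∑ a', ∑ b', ∑ c', F a c a' c' * σ a b c * σ a' b' c'
      = ∑ a, ∑ c, ∑ a', ∑ c', F a c a' c' * τ a c * τ a' c' := by
  refine Finset.sum_congr rfl fun a _ => ?_
  rw [Finset.sum_comm]
  refine Finset.sum_congr rfl fun c _ => ?_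
  have hS : (∑ a', ∑ b', ∑ c', F a c a' c' * σ a' b' c')
      = ∑ a', ∑ c', F a c a' c' * τ a' c' := by
    refine Finset.sum_congr rfl fun a' _ => ?_
    rw [Finset.sum_comm]
    refine Finset.sum_congr rfl fun c' _ => ?_
    rw [← Finset.mul_sum, h a' c']
  calc ∑ b, ∑ a', ∑ b', ∑ c', F a c a' c' * σ a b c * σ a' b' c'
      = ∑ b, σ a b c * ∑ a', ∑ b', ∑ c', F a c a' c' * σ a' b' c' := by
        refine Finset.sum_congr rfl fun b _ => ?_
        rw [Finset.mul_sum]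
        refine Finset.sum_congr rfl fun a' _ => ?_
        rw [Finset.mul_sum]
        refine Finset.sum_congr rfl fun b' _ => ?_
        rw [Finset.mul_sum]
        exact Finset.sum_congr rfl fun c' _ => by ring
    _ = τ a c * ∑ a', ∑ b', ∑ c', F a c a' c' * σ a' b' c' := by
        rw [← Finset.sum_mul, h a c]
    _ = τ a c * ∑ a', ∑ c', F a c a' c' * τ a' c' := by rw [hS]
    _ = ∑ a', ∑ c', F a c a' c' * τ a c * τ a' c' := by
        rw [Finset.mul_sum]
        refine Finset.sum_congr rfl fun a' _ => ?_
        rw [Finset.mul_sum]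
        exact Finset.sum_congr rfl fun c' _ => by ring

end Collapse

/-- Gluing two couplings and the key `sqrt`-triangle bound on objectives. -/
lemma glued_bound {n m p : ℕ}
    (D1 : Fin n → Fin n → ℝ) (μ1 : Fin n → ℝ)
    (D2 : Fin m → Fin m → ℝ) (μ2 : Fin m → ℝ)
    (D3 : Fin p → Fin p → ℝ) (μ3 : Fin p → ℝ)
    (hμ2 : ∀ j, 0 ≤ μ2 j)
    {π12 : Fin n → Fin m → ℝ} (h12 : π12 ∈ couplings μ1 μ2)
    {π23 : Fin m → Fin p → ℝ} (h23 : π23 ∈ couplings μ2 μ3) :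
    ∃ π13 ∈ couplings μ1 μ3,
      Real.sqrt (GWobj D1 D3 π13)
        ≤ Real.sqrt (GWobj D1 D2 π12) + Real.sqrt (GWobj D2 D3 π23) := by
  obtain ⟨h12pos, h12row, h12col⟩ := h12
  obtain ⟨h23pos, h23row, h23col⟩ := h23
  set σ : Fin n → Fin m → Fin p → ℝ := fun i j k => π12 i j * π23 j k / μ2 j with hσ
  have h12z : ∀ i j, μ2 j = 0 → π12 i j = 0 := by
    intro i j hj
    have h0 : ∑ i, π12 i j = 0 := by rw [h12col j, hj]
    exact (Finset.sum_eq_zero_iff_of_nonneg (fun i _ => h12pos i j)).1 h0 i (Finset.mem_univ i)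
  have h23z : ∀ j k, μ2 j = 0 → π23 j k = 0 := by
    intro j k hj
    have h0 : ∑ k, π23 j k = 0 := by rw [h23row j, hj]
    exact (Finset.sum_eq_zero_iff_of_nonneg (fun k _ => h23pos j k)).1 h0 k (Finset.mem_univ k)
  have hσ0 : ∀ i j k, 0 ≤ σ i j k := fun i j k =>
    div_nonneg (mul_nonneg (h12pos i j) (h23pos j k)) (hμ2 j)
  have hσk : ∀ i j, ∑ k, σ i j k = π12 i j := by
    intro i j
    by_cases hj : μ2 j = 0
    · simp [hσ, hj, h12z i j hj]
    · have : ∀ k, σ i j k = π12 i j / μ2 j * π23 j k := fun k => by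
        simp only [hσ]; ring
      rw [Finset.sum_congr rfl fun k _ => this k, ← Finset.mul_sum, h23row j,
        div_mul_cancel₀ _ hj]
  have hσi : ∀ j k, ∑ i, σ i j k = π23 j k := by
    intro j k
    by_cases hj : μ2 j = 0
    · simp [hσ, hj, h23z j k hj]
    · have : ∀ i, σ i j k = π23 j k / μ2 j * π12 i j := fun i => by
        simp only [hσ]; ring
      rw [Finset.sum_congr rfl fun i _ => this i, ← Finset.mul_sum, h12col j,
        div_mul_cancel₀ _ hj]
  set π13 : Fin n → Fin p → ℝ := fun i k => ∑ j, σ i j k with hπ13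
  have hmem : π13 ∈ couplings μ1 μ3 := by
    refine ⟨fun i k => Finset.sum_nonneg fun j _ => hσ0 i j k, ?_, ?_⟩
    · intro i
      calc ∑ k, ∑ j, σ i j k = ∑ j, ∑ k, σ i j k := Finset.sum_comm
        _ = ∑ j, π12 i j := Finset.sum_congr rfl fun j _ => hσk i j
        _ = μ1 i := h12row i
    · intro k
      calc ∑ i, ∑ j, σ i j k = ∑ j, ∑ i, σ i j k := Finset.sum_comm
        _ = ∑ j, π23 j k := Finset.sum_congr rfl fun j _ => hσi j k
        _ = μ3 k := h23col k
  refine ⟨π13, hmem, ?_⟩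
  -- set up Minkowski on the product index set
  set w : (Fin n × Fin m × Fin p) × (Fin n × Fin m × Fin p) → ℝ := fun x => σ x.1.1 x.1.2.1 x.1.2.2 * σ x.2.1 x.2.2.1 x.2.2.2 with hw
  set a : (Fin n × Fin m × Fin p) × (Fin n × Fin m × Fin p) → ℝ := fun x => D1 x.1.1 x.2.1 - D2 x.1.2.1 x.2.2.1 with ha
  set b : (Fin n × Fin m × Fin p) × (Fin n × Fin m × Fin p) → ℝ := fun x => D2 x.1.2.1 x.2.2.1 - D3 x.1.2.2 x.2.2.2 with hb
  have hw0 : ∀ x : (Fin n × Fin m × Fin p) × (Fin n × Fin m × Fin p), 0 ≤ w x := fun x => mul_nonneg (hσ0 _ _ _) (hσ0 _ _ _)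
  have E1 : (∑ x : (Fin n × Fin m × Fin p) × (Fin n × Fin m × Fin p), w x * (a x + b x) ^ 2) = GWobj D1 D3 π13 := by
    calc ∑ x : (Fin n × Fin m × Fin p) × (Fin n × Fin m × Fin p), w x * (a x + b x) ^ 2
        = ∑ i, ∑ j, ∑ k, ∑ i', ∑ j', ∑ k',
            (D1 i i' - D3 k k') ^ 2 * σ i j k * σ i' j' k' := by
          simp only [Fintype.sum_prod_type]
          refine Finset.sum_congr rfl fun i _ => Finset.sum_congr rfl fun j _ =>
            Finset.sum_congr rfl fun k _ => Finset.sum_congr rfl fun i' _ =>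
            Finset.sum_congr rfl fun j' _ => Finset.sum_congr rfl fun k' _ => ?_
          simp only [hw, ha, hb]
          ring
      _ = ∑ i, ∑ k, ∑ i', ∑ k', (D1 i i' - D3 k k') ^ 2 * π13 i k * π13 i' k' :=
          collapse3_mid σ π13 (fun _ _ => rfl) (fun i k i' k' => (D1 i i' - D3 k k') ^ 2)
      _ = GWobj D1 D3 π13 := rfl
  have E2 : (∑ x : (Fin n × Fin m × Fin p) × (Fin n × Fin m × Fin p), w x * a x ^ 2) = GWobj D1 D2 π12 := by
    calc ∑ x : (Fin n × Fin m × Fin p) × (Fin n × Fin m × Fin p), w x * a x ^ 2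
        = ∑ i, ∑ j, ∑ k, ∑ i', ∑ j', ∑ k',
            (D1 i i' - D2 j j') ^ 2 * σ i j k * σ i' j' k' := by
          simp only [Fintype.sum_prod_type]
          refine Finset.sum_congr rfl fun i _ => Finset.sum_congr rfl fun j _ =>
            Finset.sum_congr rfl fun k _ => Finset.sum_congr rfl fun i' _ =>
            Finset.sum_congr rfl fun j' _ => Finset.sum_congr rfl fun k' _ => ?_
          simp only [hw, ha]
          ring
      _ = ∑ i, ∑ j, ∑ i', ∑ j', (D1 i i' - D2 j j') ^ 2 * π12 i j * π12 i' j' :=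
          collapse3_right σ π12 hσk (fun i j i' j' => (D1 i i' - D2 j j') ^ 2)
      _ = GWobj D1 D2 π12 := rfl
  have E3 : (∑ x : (Fin n × Fin m × Fin p) × (Fin n × Fin m × Fin p), w x * b x ^ 2) = GWobj D2 D3 π23 := by
    calc ∑ x : (Fin n × Fin m × Fin p) × (Fin n × Fin m × Fin p), w x * b x ^ 2
        = ∑ i, ∑ j, ∑ k, ∑ i', ∑ j', ∑ k',
            (D2 j j' - D3 k k') ^ 2 * σ i j k * σ i' j' k' := by
          simp only [Fintype.sum_prod_type]
          refine Finset.sum_congr rfl fun i _ => Finset.sum_congr rfl fun j _ =>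
            Finset.sum_congr rfl fun k _ => Finset.sum_congr rfl fun i' _ =>
            Finset.sum_congr rfl fun j' _ => Finset.sum_congr rfl fun k' _ => ?_
          simp only [hw, hb]
          ring
      _ = ∑ j, ∑ k, ∑ j', ∑ k', (D2 j j' - D3 k k') ^ 2 * π23 j k * π23 j' k' :=
          collapse3_left σ π23 hσi (fun j k j' k' => (D2 j j' - D3 k k') ^ 2)
      _ = GWobj D2 D3 π23 := rfl
  have := weighted_minkowski w a b hw0
  rw [E1, E2, E3] at this
  exact this

theorem gw_sqrt_triangle {n m p : ℕ}
    (D1 : Fin n → Fin n → ℝ) (μ1 : Fin n → ℝ)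
    (D2 : Fin m → Fin m → ℝ) (μ2 : Fin m → ℝ)
    (D3 : Fin p → Fin p → ℝ) (μ3 : Fin p → ℝ)
    (hμ1 : ∀ i, 0 ≤ μ1 i) (hμ1s : ∑ i, μ1 i = 1)
    (hμ2 : ∀ j, 0 ≤ μ2 j) (hμ2s : ∑ j, μ2 j = 1)
    (hμ3 : ∀ k, 0 ≤ μ3 k) (hμ3s : ∑ k, μ3 k = 1) :
    Real.sqrt (GW D1 μ1 D3 μ3)
      ≤ Real.sqrt (GW D1 μ1 D2 μ2) + Real.sqrt (GW D2 μ2 D3 μ3) := by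
  -- product couplings show nonemptiness
  have hprod : ∀ {q r : ℕ} (ν1 : Fin q → ℝ) (ν2 : Fin r → ℝ), (∀ i, 0 ≤ ν1 i) →
      (∀ j, 0 ≤ ν2 j) → (∑ i, ν1 i = 1) → (∑ j, ν2 j = 1) →
      (fun i j => ν1 i * ν2 j) ∈ couplings ν1 ν2 := by
    intro q r ν1 ν2 h1 h2 hs1 hs2
    refine ⟨fun i j => mul_nonneg (h1 i) (h2 j), fun i => ?_, fun j => ?_⟩
    · rw [← Finset.mul_sum, hs2, mul_one]
    · rw [← Finset.sum_mul, hs1, one_mul]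
  have hne12 : (GWobj D1 D2 '' couplings μ1 μ2).Nonempty :=
    ⟨_, ⟨_, hprod μ1 μ2 hμ1 hμ2 hμ1s hμ2s, rfl⟩⟩
  have hne23 : (GWobj D2 D3 '' couplings μ2 μ3).Nonempty :=
    ⟨_, ⟨_, hprod μ2 μ3 hμ2 hμ3 hμ2s hμ3s, rfl⟩⟩
  have hlb13 : ∀ x ∈ GWobj D1 D3 '' couplings μ1 μ3, (0:ℝ) ≤ x := by
    rintro x ⟨π, hπ, rfl⟩; exact GWobj_nonneg D1 D3 hπ.1
  have hlb12 : ∀ x ∈ GWobj D1 D2 '' couplings μ1 μ2, (0:ℝ) ≤ x := by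
    rintro x ⟨π, hπ, rfl⟩; exact GWobj_nonneg D1 D2 hπ.1
  have hlb23 : ∀ x ∈ GWobj D2 D3 '' couplings μ2 μ3, (0:ℝ) ≤ x := by
    rintro x ⟨π, hπ, rfl⟩; exact GWobj_nonneg D2 D3 hπ.1
  have hGW12 : 0 ≤ GW D1 μ1 D2 μ2 := Real.sInf_nonneg hlb12
  have hGW23 : 0 ≤ GW D2 μ2 D3 μ3 := Real.sInf_nonneg hlb23
  refine le_of_forall_pos_le_add fun δ hδ => ?_
  set ε := (δ / 2) ^ 2 with hε
  have hε0 : 0 < ε := by positivity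
  obtain ⟨x12, ⟨π12, hπ12, rfl⟩, hx12⟩ := Real.lt_sInf_add_pos hne12 hε0
  obtain ⟨x23, ⟨π23, hπ23, rfl⟩, hx23⟩ := Real.lt_sInf_add_pos hne23 hε0
  obtain ⟨π13, hπ13, hbd⟩ := glued_bound D1 μ1 D2 μ2 D3 μ3 hμ2 hπ12 hπ23
  have hGW13le : GW D1 μ1 D3 μ3 ≤ GWobj D1 D3 π13 :=
    csInf_le ⟨0, fun x hx => hlb13 x hx⟩ ⟨π13, hπ13, rfl⟩
  have step1 : Real.sqrt (GW D1 μ1 D3 μ3) ≤ Real.sqrt (GWobj D1 D3 π13) :=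
    Real.sqrt_le_sqrt hGW13le
  have step2 : Real.sqrt (GWobj D1 D2 π12) ≤ Real.sqrt (GW D1 μ1 D2 μ2 + ε) :=
    Real.sqrt_le_sqrt hx12.le
  have step3 : Real.sqrt (GWobj D2 D3 π23) ≤ Real.sqrt (GW D2 μ2 D3 μ3 + ε) :=
    Real.sqrt_le_sqrt hx23.le
  have hsub : ∀ x : ℝ, 0 ≤ x → Real.sqrt (x + ε) ≤ Real.sqrt x + δ / 2 := by
    intro x hx
    have h1 : x + ε ≤ (Real.sqrt x + δ / 2) ^ 2 := by
      have := Real.sq_sqrt hx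
      have hs := Real.sqrt_nonneg x
      nlinarith
    calc Real.sqrt (x + ε) ≤ Real.sqrt ((Real.sqrt x + δ / 2) ^ 2) := Real.sqrt_le_sqrt h1
      _ = Real.sqrt x + δ / 2 := Real.sqrt_sq (by positivity)
  calc Real.sqrt (GW D1 μ1 D3 μ3)
      ≤ Real.sqrt (GWobj D1 D3 π13) := step1
    _ ≤ Real.sqrt (GWobj D1 D2 π12) + Real.sqrt (GWobj D2 D3 π23) := hbd
    _ ≤ Real.sqrt (GW D1 μ1 D2 μ2 + ε) + Real.sqrt (GW D2 μ2 D3 μ3 + ε) :=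
        add_le_add step2 step3
    _ ≤ (Real.sqrt (GW D1 μ1 D2 μ2) + δ / 2) + (Real.sqrt (GW D2 μ2 D3 μ3) + δ / 2) :=
        add_le_add (hsub _ hGW12) (hsub _ hGW23)
    _ = Real.sqrt (GW D1 μ1 D2 μ2) + Real.sqrt (GW D2 μ2 D3 μ3) + δ := by ring
end

section
/- 1 minus the Jaccard similarity is a metric on finite subsets of a fixed ground set: d(A,B) = 1 − |A∩B|/|A∪B| (with d(∅,∅)=0) satisfies nonnegativity, symmetry, identity of indiscernibles, and the triangle inequality. -/
/-!
Write `d(A, B) = |A ∆ B| / |A ∪ B|`. For the triangle inequality, first enlarge numerator and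
denominator of `d(A, C)` by `|B \ (A ∪ C)|`, which does not decrease a fraction at most `1` and
makes the denominator `|A ∪ B ∪ C|`. The new numerator is at most `|A ∆ B| + |B ∆ C|`, since
`A ∆ C ⊆ A ∆ B ∪ B ∆ C` and `B \ (A ∪ C) ⊆ A ∆ B ∩ B ∆ C`; shrinking the common denominator back
to `|A ∪ B|` and `|B ∪ C|` gives `d(A, B) + d(B, C)`.
-/

noncomputable def jaccardDist {α : Type*} [DecidableEq α] (A B : Finset α) : ℝ :=
  if A ∪ B = ∅ then 0 else 1 - (A ∩ B).card / (A ∪ B).card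

open Finset
open scoped symmDiff

theorem div_le_add_div_add {K : Type*} [Field K] [LinearOrder K] [IsStrictOrderedRing K]
    {x y t : K} (hx : 0 ≤ x) (hxy : x ≤ y) (ht : 0 ≤ t) : x / y ≤ (x + t) / (y + t) := by
  rcases (hx.trans hxy).lt_or_eq with hy | hy
  · rw [div_le_div_iff₀ hy (by positivity)]
    nlinarith
  · simp only [← hy, div_zero]
    positivity

namespace Finset

variable {α : Type*}

theorem card_div_card_le_card_div_card_of_subset {s t u : Finset α} (hst : s ⊆ t) (htu : t ⊆ u) :
    (#s : ℝ) / #u ≤ #s / #t := by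
  rcases s.eq_empty_or_nonempty with rfl | hs
  · simp
  · have ht : (0 : ℝ) < #t := by exact_mod_cast card_pos.2 (hs.mono hst)
    exact div_le_div_of_nonneg_left (by positivity) ht (by exact_mod_cast card_le_card htu)

variable [DecidableEq α]

theorem card_symmDiff_add_card_sdiff_union_le (A B C : Finset α) :
    #(A ∆ C) + #(B \ (A ∪ C)) ≤ #(A ∆ B) + #(B ∆ C) := by
  have hcover : A ∆ C ⊆ A ∆ B ∪ B ∆ C := symmDiff_triangle A B C
  have hcommon : B \ (A ∪ C) ⊆ A ∆ B ∩ B ∆ C := by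
    intro x
    simp only [mem_sdiff, mem_union, mem_inter, mem_symmDiff]
    tauto
  calc #(A ∆ C) + #(B \ (A ∪ C)) ≤ #(A ∆ B ∪ B ∆ C) + #(A ∆ B ∩ B ∆ C) :=
        add_le_add (card_le_card hcover) (card_le_card hcommon)
    _ = #(A ∆ B) + #(B ∆ C) := card_union_add_card_inter _ _

end Finset

section jaccardDist

variable {α : Type*} [DecidableEq α]

-- Covers `A = B = ∅` too, since `0 / 0 = 0`; every later lemma works from this form alone.
theorem jaccardDist_eq_card_symmDiff_div (A B : Finset α) :
    jaccardDist A B = #(A ∆ B) / #(A ∪ B) := by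
  unfold jaccardDist
  split_ifs with h
  · simp [union_eq_empty.1 h]
  · have hpos : (0 : ℝ) < #(A ∪ B) := by exact_mod_cast card_pos.2 (nonempty_iff_ne_empty.2 h)
    rw [symmDiff_eq_sup_sdiff_inf, sup_eq_union, inf_eq_inter,
      card_sdiff_of_subset inter_subset_union, Nat.cast_sub (card_le_card inter_subset_union),
      sub_div, div_self hpos.ne']

theorem jaccardDist_nonneg (A B : Finset α) : 0 ≤ jaccardDist A B := by
  rw [jaccardDist_eq_card_symmDiff_div]
  positivity

theorem jaccardDist_comm (A B : Finset α) : jaccardDist A B = jaccardDist B A := by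
  rw [jaccardDist_eq_card_symmDiff_div, jaccardDist_eq_card_symmDiff_div, symmDiff_comm,
    union_comm]

theorem jaccardDist_eq_zero_iff {A B : Finset α} : jaccardDist A B = 0 ↔ A = B := by
  simp only [jaccardDist_eq_card_symmDiff_div, div_eq_zero_iff, Nat.cast_eq_zero, card_eq_zero,
    symmDiff_eq_empty, union_eq_empty]
  constructor
  · rintro (rfl | ⟨rfl, rfl⟩) <;> rfl
  · exact Or.inl

theorem jaccardDist_triangle (A B C : Finset α) :
    jaccardDist A C ≤ jaccardDist A B + jaccardDist B C := by
  have hU : (#(B ∪ (A ∪ C)) : ℝ) = #(A ∪ C) + #(B \ (A ∪ C)) := by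
    rw [← card_sdiff_add_card, Nat.cast_add, add_comm]
  simp only [jaccardDist_eq_card_symmDiff_div]
  calc (#(A ∆ C) : ℝ) / #(A ∪ C)
      ≤ (#(A ∆ C) + #(B \ (A ∪ C))) / #(B ∪ (A ∪ C)) := by
        rw [hU]
        exact div_le_add_div_add (by positivity)
          (by exact_mod_cast card_le_card symmDiff_le_sup) (by positivity)
    _ ≤ (#(A ∆ B) + #(B ∆ C)) / #(B ∪ (A ∪ C)) := by
        refine div_le_div_of_nonneg_right ?_ (by positivity)
        exact_mod_cast card_symmDiff_add_card_sdiff_union_le A B C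
    _ = #(A ∆ B) / #(B ∪ (A ∪ C)) + #(B ∆ C) / #(B ∪ (A ∪ C)) := add_div _ _ _
    _ ≤ #(A ∆ B) / #(A ∪ B) + #(B ∆ C) / #(B ∪ C) := by
        gcongr ?_ + ?_ <;> apply card_div_card_le_card_div_card_of_subset symmDiff_le_sup <;>
          intro x <;> simp only [mem_union] <;> tauto

end jaccardDist

theorem jaccard_dist_is_metric_general {α : Type*} [DecidableEq α]
    (A B C : Finset α) :
    0 ≤ jaccardDist A B ∧
    jaccardDist A B = jaccardDist B A ∧
    (jaccardDist A B = 0 ↔ A = B) ∧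
    jaccardDist A C ≤ jaccardDist A B + jaccardDist B C :=
  ⟨jaccardDist_nonneg A B, jaccardDist_comm A B, jaccardDist_eq_zero_iff,
    jaccardDist_triangle A B C⟩

theorem jaccard_dist_is_metric {α : Type*} [DecidableEq α] [Fintype α]
    (A B C : Finset α) :
    0 ≤ jaccardDist A B ∧
    jaccardDist A B = jaccardDist B A ∧
    (jaccardDist A B = 0 ↔ A = B) ∧
    jaccardDist A C ≤ jaccardDist A B + jaccardDist B C :=
  jaccard_dist_is_metric_general A B C
end
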